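/- arXiv:1306.5085 — 2 statements merged into one kernel-verified Lean document; each statement's English description precedes it below -/
import Mathlib

section
/- (Sylvester's theorem) The sequence of coefficients $p_0(\ell,m), p_1(\ell,m), \ldots, p_{\ell m}(\ell,m)$ of the q-binomial coefficient $\binom{m+\ell}{m}_q$ is unimodal: $p_0 \le p_1 \le \cdots \le p_{\lfloor \ell m/2 \rfloor}$ and $p_{\lceil \ell m/2 \rceil} \ge \cdots \ge p_{\ell m}$. -/
open Polynomial Finset

/-- `pcoef ℓ m n` is the number of partitions of `n` fitting inside an `ℓ × m`
rectangle, i.e. with at most `ℓ` parts, each part at most `m`; equivalently the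
coefficient of `q^n` in the Gaussian binomial coefficient `(m+ℓ choose m)_q`. -/
noncomputable def pcoef (ℓ m n : ℕ) : ℕ :=
  Nat.card {p : n.Partition // p.parts.card ≤ ℓ ∧ ∀ a ∈ p.parts, a ≤ m}

/-!
Proctor's sl₂ proof. A partition in the `ℓ × m` box with parts `b₀ ≤ ⋯ ≤ b_{ℓ-1}` (padded by
zeros) corresponds to the `ℓ`-subset `{bᵢ + i}` of `{0, …, N - 1}`, `N = ℓ + m`, whose sum exceeds
the partition's size by `ℓ(ℓ-1)/2`; so it suffices to compare the numbers of `ℓ`-subsets with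
element sums `s` and `s + 1`. On functions of subsets, `raise` pushes values along the moves
`j ↦ j + 1` of one element and `lower` pulls them back with the weights `(j + 1)(N - 1 - j)` of the
`N`-dimensional irreducible sl₂-module, so that `lower ∘ raise - raise ∘ lower` is diagonal and acts
on functions supported on subsets of sum `s` as the scalar `ℓ(N - 1) - 2s`. While this scalar is
positive, induction on `s` shows that `lower ∘ raise` has no eigenvalue `≤ 0` there; in particular
`raise` is injective from sum `s` to sum `s + 1`. The reflection `t ↦ N - 1 - t` turns this into the
decreasing half.
-/

namespace Sylvester

section Moves

def moveUp (j : ℕ) (T : Finset ℕ) : Finset ℕ := insert (j + 1) (T.erase j)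

def moveDown (j : ℕ) (T : Finset ℕ) : Finset ℕ := insert j (T.erase (j + 1))

def upMoves (N : ℕ) (T : Finset ℕ) : Finset ℕ :=
  (range (N - 1)).filter fun j => j ∈ T ∧ j + 1 ∉ T

def downMoves (N : ℕ) (T : Finset ℕ) : Finset ℕ :=
  (range (N - 1)).filter fun j => j ∉ T ∧ j + 1 ∈ T

variable {N i j a : ℕ} {T : Finset ℕ}

@[simp]
lemma mem_moveUp : a ∈ moveUp j T ↔ a = j + 1 ∨ a ≠ j ∧ a ∈ T := by
  simp [moveUp]

@[simp]
lemma mem_moveDown : a ∈ moveDown j T ↔ a = j ∨ a ≠ j + 1 ∧ a ∈ T := by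
  simp [moveDown]

lemma mem_upMoves : j ∈ upMoves N T ↔ j + 1 < N ∧ j ∈ T ∧ j + 1 ∉ T := by
  simp [upMoves]; omega

lemma mem_downMoves : j ∈ downMoves N T ↔ j + 1 < N ∧ j ∉ T ∧ j + 1 ∈ T := by
  simp [downMoves]; omega

lemma mem_upMoves_moveDown (hi : i ∈ downMoves N T) : i ∈ upMoves N (moveDown i T) := by
  simp only [mem_downMoves, mem_upMoves, mem_moveDown] at hi ⊢
  grind

lemma mem_downMoves_moveUp (hj : j ∈ upMoves N T) : j ∈ downMoves N (moveUp j T) := by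
  simp only [mem_downMoves, mem_upMoves, mem_moveUp] at hj ⊢
  grind

lemma moveDown_moveUp (hj : j ∈ T) (hj' : j + 1 ∉ T) : moveDown j (moveUp j T) = T := by
  ext a; simp only [mem_moveDown, mem_moveUp]; grind

lemma moveUp_moveDown (hj : j ∉ T) (hj' : j + 1 ∈ T) : moveUp j (moveDown j T) = T := by
  ext a; simp only [mem_moveDown, mem_moveUp]; grind

lemma moveDown_moveUp_comm (hij : i ≠ j) :
    moveDown i (moveUp j T) = moveUp j (moveDown i T) := by
  ext a; simp only [mem_moveDown, mem_moveUp]; grind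

lemma downMoves_moveUp (hj : j ∈ upMoves N T) :
    downMoves N (moveUp j T) =
      insert j ((downMoves N T).filter fun i => i + 1 ≠ j ∧ j + 1 ≠ i) := by
  rw [mem_upMoves] at hj
  ext i; simp only [mem_insert, mem_filter, mem_downMoves, mem_moveUp]; grind

lemma upMoves_moveDown (hi : i ∈ downMoves N T) :
    upMoves N (moveDown i T) =
      insert i ((upMoves N T).filter fun j => j + 1 ≠ i ∧ i + 1 ≠ j) := by
  rw [mem_downMoves] at hi
  ext j; simp only [mem_insert, mem_filter, mem_upMoves, mem_moveDown]; grind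

lemma card_moveUp (hj : j ∈ T) (hj' : j + 1 ∉ T) : #(moveUp j T) = #T := by
  rw [moveUp, card_insert_of_notMem (by simp [hj']), card_erase_add_one hj]

lemma sum_moveUp (hj : j ∈ T) (hj' : j + 1 ∉ T) :
    ∑ a ∈ moveUp j T, a = ∑ a ∈ T, a + 1 := by
  rw [moveUp, sum_insert (by simp [hj']), ← sum_erase_add _ _ hj]
  ring

end Moves

section Operators

variable (N : ℕ)

def coeff (j : ℕ) : ℚ := (j + 1) * (N - 1 - j)

def weight (T : Finset ℕ) : ℚ := ∑ t ∈ T, ((N : ℚ) - 1 - 2 * t)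

def raise : (Finset ℕ → ℚ) →ₗ[ℚ] Finset ℕ → ℚ :=
  LinearMap.pi fun T => ∑ i ∈ downMoves N T, LinearMap.proj (moveDown i T)

def lower : (Finset ℕ → ℚ) →ₗ[ℚ] Finset ℕ → ℚ :=
  LinearMap.pi fun T => ∑ j ∈ upMoves N T, coeff N j • LinearMap.proj (moveUp j T)

variable {N} {T : Finset ℕ}

lemma raise_apply (v : Finset ℕ → ℚ) (T : Finset ℕ) :
    raise N v T = ∑ i ∈ downMoves N T, v (moveDown i T) := by
  simp [raise]

lemma lower_apply (v : Finset ℕ → ℚ) (T : Finset ℕ) :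
    lower N v T = ∑ j ∈ upMoves N T, coeff N j * v (moveUp j T) := by
  simp [lower]

lemma sum_coeff_upMoves_sub_sum_coeff_downMoves (hT : T ⊆ range N) :
    ∑ j ∈ upMoves N T, coeff N j - ∑ j ∈ downMoves N T, coeff N j = weight N T := by
  rcases N with _ | n
  · simp [subset_empty.1 hT, upMoves, downMoves, weight]
  set χ : ℕ → ℚ := fun t => if t ∈ T then 1 else 0
  have hχ : ∀ f : ℕ → ℚ, ∑ t ∈ T, f t = ∑ t ∈ range (n + 1), χ t * f t := fun f => by
    simp only [χ, ite_mul, one_mul, zero_mul, ← sum_filter, filter_mem_eq_inter,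
      inter_eq_right.2 hT]
  have hup : ∑ j ∈ upMoves (n + 1) T, coeff (n + 1) j =
      ∑ j ∈ range n, χ j * (1 - χ (j + 1)) * coeff (n + 1) j := by
    simp only [upMoves, sum_filter, χ]
    refine sum_congr (by simp) fun j _ => ?_
    split_ifs <;> simp_all
  have hdown : ∑ j ∈ downMoves (n + 1) T, coeff (n + 1) j =
      ∑ j ∈ range n, (1 - χ j) * χ (j + 1) * coeff (n + 1) j := by
    simp only [downMoves, sum_filter, χ]
    refine sum_congr (by simp) fun j _ => ?_
    split_ifs <;> simp_all
  -- `n - 2t = coeff (n + 1) t - t (n + 1 - t)` and `t (n + 1 - t) = coeff (n + 1) (t - 1)`,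
  -- so the weight telescopes along each run of consecutive elements of `T`.
  have htop : ∑ t ∈ range (n + 1), χ t * coeff (n + 1) t =
      ∑ j ∈ range n, χ j * coeff (n + 1) j := by
    simp [sum_range_succ, coeff]
  have hbot : ∑ t ∈ range (n + 1), χ t * (t * (n + 1 - t)) =
      ∑ j ∈ range n, χ (j + 1) * coeff (n + 1) j := by
    rw [sum_range_succ']
    simp only [coeff]
    push_cast
    simp only [zero_mul, mul_zero, add_zero]
    exact sum_congr rfl fun j _ => by ring
  calc _ = ∑ j ∈ range n, χ j * coeff (n + 1) j - ∑ j ∈ range n, χ (j + 1) * coeff (n + 1) j := by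
        rw [hup, hdown, ← sum_sub_distrib, ← sum_sub_distrib]
        exact sum_congr rfl fun j _ => by ring
    _ = ∑ t ∈ range (n + 1), χ t * coeff (n + 1) t -
          ∑ t ∈ range (n + 1), χ t * (t * (n + 1 - t)) := by rw [htop, hbot]
    _ = weight (n + 1) T := by
        rw [weight, hχ, ← sum_sub_distrib]
        exact sum_congr rfl fun t _ => by simp only [coeff]; push_cast; ring

lemma lower_raise_apply (v : Finset ℕ → ℚ) (hT : T ⊆ range N) :
    lower N (raise N v) T = weight N T * v T + raise N (lower N v) T := by
  have hne : ∀ {i j}, i ∈ downMoves N T → j ∈ upMoves N T → i ≠ j := fun hi hj h =>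
    (mem_downMoves.1 hi).2.1 (h ▸ (mem_upMoves.1 hj).2.1)
  have hlr : lower N (raise N v) T = (∑ j ∈ upMoves N T, coeff N j) * v T +
      ∑ j ∈ upMoves N T, ∑ i ∈ (downMoves N T).filter (fun i => i + 1 ≠ j ∧ j + 1 ≠ i),
        coeff N j * v (moveDown i (moveUp j T)) := by
    rw [lower_apply, sum_mul, ← sum_add_distrib]
    refine sum_congr rfl fun j hj => ?_
    have hj' := mem_upMoves.1 hj
    rw [raise_apply, downMoves_moveUp hj, sum_insert (by simp [mem_downMoves, hj'.2.1]),
      moveDown_moveUp hj'.2.1 hj'.2.2, mul_add, mul_sum]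
  have hrl : raise N (lower N v) T = (∑ i ∈ downMoves N T, coeff N i) * v T +
      ∑ i ∈ downMoves N T, ∑ j ∈ (upMoves N T).filter (fun j => j + 1 ≠ i ∧ i + 1 ≠ j),
        coeff N j * v (moveUp j (moveDown i T)) := by
    rw [raise_apply, sum_mul, ← sum_add_distrib]
    refine sum_congr rfl fun i hi => ?_
    have hi' := mem_downMoves.1 hi
    rw [lower_apply, upMoves_moveDown hi, sum_insert (by simp [mem_upMoves, hi'.2.1]),
      moveUp_moveDown hi'.2.1 hi'.2.2]
  have hcross :
      ∑ j ∈ upMoves N T, ∑ i ∈ (downMoves N T).filter (fun i => i + 1 ≠ j ∧ j + 1 ≠ i),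
        coeff N j * v (moveDown i (moveUp j T)) =
      ∑ i ∈ downMoves N T, ∑ j ∈ (upMoves N T).filter (fun j => j + 1 ≠ i ∧ i + 1 ≠ j),
        coeff N j * v (moveUp j (moveDown i T)) := by
    rw [sum_comm' (t' := downMoves N T)
      (s' := fun i => (upMoves N T).filter fun j => j + 1 ≠ i ∧ i + 1 ≠ j)
      (by intro j i; simp only [mem_filter]; tauto)]
    refine sum_congr rfl fun i hi => sum_congr rfl fun j hj => ?_
    rw [moveDown_moveUp_comm (hne hi (mem_filter.1 hj).1)]
  rw [hlr, hrl, hcross, ← sum_coeff_upMoves_sub_sum_coeff_downMoves hT]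
  ring

end Operators

section Levels

def level (N ℓ s : ℕ) : Finset (Finset ℕ) :=
  ((range N).powersetCard ℓ).filter fun T => ∑ t ∈ T, t = s

variable {N ℓ s i j : ℕ} {T : Finset ℕ}

lemma mem_level : T ∈ level N ℓ s ↔ T ⊆ range N ∧ #T = ℓ ∧ ∑ t ∈ T, t = s := by
  simp [level, mem_powersetCard, and_assoc]

lemma moveUp_mem_level (hT : T ∈ level N ℓ s) (hj : j ∈ upMoves N T) :
    moveUp j T ∈ level N ℓ (s + 1) := by
  obtain ⟨hsub, hcard, hsum⟩ := mem_level.1 hT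
  obtain ⟨hjN, hj, hj'⟩ := mem_upMoves.1 hj
  refine mem_level.2 ⟨fun a ha => ?_, by rw [card_moveUp hj hj', hcard],
    by rw [sum_moveUp hj hj', hsum]⟩
  rcases mem_moveUp.1 ha with rfl | ⟨-, ha⟩
  exacts [mem_range.2 hjN, hsub ha]

lemma moveDown_mem_level (hT : T ∈ level N ℓ (s + 1)) (hi : i ∈ downMoves N T) :
    moveDown i T ∈ level N ℓ s := by
  obtain ⟨hsub, hcard, hsum⟩ := mem_level.1 hT
  obtain ⟨hiN, hiS, hiS'⟩ := mem_upMoves.1 (mem_upMoves_moveDown hi)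
  have hT' := moveUp_moveDown (mem_downMoves.1 hi).2.1 (mem_downMoves.1 hi).2.2
  have hsum' := sum_moveUp hiS hiS'
  rw [hT', hsum] at hsum'
  refine mem_level.2 ⟨fun a ha => ?_, by rw [← card_moveUp hiS hiS', hT', hcard], by omega⟩
  rcases mem_moveDown.1 ha with rfl | ⟨-, ha⟩
  exacts [mem_range.2 (by omega), hsub ha]

lemma weight_of_mem_level (hT : T ∈ level N ℓ s) :
    weight N T = ℓ * ((N : ℚ) - 1) - 2 * s := by
  obtain ⟨-, hcard, hsum⟩ := mem_level.1 hT
  simp only [weight, sum_sub_distrib, sum_const, hcard, ← mul_sum]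
  rw [← hsum]
  push_cast
  ring

open Function

variable {v : Finset ℕ → ℚ} {μ : ℚ}

lemma support_raise_subset (hv : support v ⊆ level N ℓ s) :
    support (raise N v) ⊆ level N ℓ (s + 1) := by
  intro T hT
  obtain ⟨i, hi, hvi⟩ := exists_ne_zero_of_sum_ne_zero (by rwa [mem_support, raise_apply] at hT)
  have hi' := mem_downMoves.1 hi
  simpa [moveUp_moveDown hi'.2.1 hi'.2.2] using
    moveUp_mem_level (hv hvi) (mem_upMoves_moveDown hi)

lemma support_lower_subset (hv : support v ⊆ level N ℓ (s + 1)) :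
    support (lower N v) ⊆ level N ℓ s := by
  intro T hT
  obtain ⟨j, hj, hvj⟩ := exists_ne_zero_of_sum_ne_zero (by rwa [mem_support, lower_apply] at hT)
  have hj' := mem_upMoves.1 hj
  simpa [moveDown_moveUp hj'.2.1 hj'.2.2] using
    moveDown_mem_level (hv (right_ne_zero_of_mul hvj)) (mem_downMoves_moveUp hj)

lemma lower_eq_zero_of_support_subset_level_zero (hv : support v ⊆ level N ℓ 0) :
    lower N v = 0 := by
  ext T
  refine (lower_apply v T).trans (sum_eq_zero fun j hj => ?_)
  have hj' := mem_upMoves.1 hj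
  have : v (moveUp j T) = 0 := notMem_support.1 fun h => by
    simpa [sum_moveUp hj'.2.1 hj'.2.2] using (mem_level.1 (hv h)).2.2
  rw [this, mul_zero]

lemma lower_raise_of_support_subset (hv : support v ⊆ level N ℓ s) :
    lower N (raise N v) = (ℓ * ((N : ℚ) - 1) - 2 * s) • v + raise N (lower N v) := by
  ext T
  by_cases hT : T ∈ level N ℓ s
  · rw [lower_raise_apply v (mem_level.1 hT).1, weight_of_mem_level hT]
    rfl
  have hrl : raise N (lower N v) T = 0 := by
    rcases s with _ | s
    · simp [lower_eq_zero_of_support_subset_level_zero hv]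
    · exact notMem_support.1 fun h => hT (support_raise_subset (support_lower_subset hv) h)
  rw [Pi.add_apply, Pi.smul_apply, hrl, notMem_support.1 fun h => hT (hv h),
    notMem_support.1 fun h => hT (support_lower_subset (support_raise_subset hv) h)]
  simp

lemma raise_lower_eq_smul (hv : support v ⊆ level N ℓ s) (h : lower N (raise N v) = μ • v) :
    raise N (lower N v) = (μ - (ℓ * ((N : ℚ) - 1) - 2 * s)) • v := by
  rw [sub_smul, ← h, lower_raise_of_support_subset hv]
  abel

lemma eq_zero_of_lower_eq_zero (hs : 2 * (s : ℚ) < ℓ * ((N : ℚ) - 1)) (hμ : μ ≤ 0)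
    (hv : support v ⊆ level N ℓ s) (h : lower N (raise N v) = μ • v) (hw : lower N v = 0) :
    v = 0 := by
  have hrl := raise_lower_eq_smul hv h
  rw [hw, map_zero, eq_comm, smul_eq_zero] at hrl
  exact hrl.resolve_left (by linarith)

lemma eq_zero_of_lower_raise_eq_smul (hs : 2 * (s : ℚ) < ℓ * ((N : ℚ) - 1)) (hμ : μ ≤ 0)
    (hv : support v ⊆ level N ℓ s) (h : lower N (raise N v) = μ • v) : v = 0 := by
  refine eq_zero_of_lower_eq_zero hs hμ hv h ?_
  induction s generalizing μ v with
  | zero => exact lower_eq_zero_of_support_subset_level_zero hv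
  | succ s ih =>
    have hs' : 2 * (s : ℚ) < ℓ * ((N : ℚ) - 1) := by push_cast at hs; linarith
    have hμ' : μ - (ℓ * ((N : ℚ) - 1) - 2 * (s + 1 : ℕ)) ≤ 0 := by push_cast at hs ⊢; linarith
    have hw : lower N (raise N (lower N v)) =
        (μ - (ℓ * ((N : ℚ) - 1) - 2 * (s + 1 : ℕ))) • lower N v := by
      rw [raise_lower_eq_smul hv h, map_smul]
    exact eq_zero_of_lower_eq_zero hs' hμ' (support_lower_subset hv) hw
      (ih hs' hμ' (support_lower_subset hv) hw)

lemma card_level_le_card_level_succ (hs : 2 * s < ℓ * (N - 1)) :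
    #(level N ℓ s) ≤ #(level N ℓ (s + 1)) := by
  have hN : 1 ≤ N := by rcases N with _ | N <;> simp_all
  have hs' : 2 * (s : ℚ) < ℓ * ((N : ℚ) - 1) := by
    rw [← Nat.cast_one, ← Nat.cast_sub hN]; exact_mod_cast hs
  let extend := ExtendByZero.linearMap ℚ ((↑) : level N ℓ s → Finset ℕ)
  let restrict := LinearMap.funLeft ℚ ℚ ((↑) : level N ℓ (s + 1) → Finset ℕ)
  have hinj : Injective (restrict ∘ₗ raise N ∘ₗ extend) := by
    rw [← LinearMap.ker_eq_bot, LinearMap.ker_eq_bot']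
    intro w hw
    have hsupp : support (extend w) ⊆ level N ℓ s := fun T hT => by
      by_contra h
      exact hT (by simpa [extend] using
        extend_apply' w (0 : Finset ℕ → ℚ) T fun ⟨a, ha⟩ => h (ha ▸ a.2))
    have hraise : raise N (extend w) = 0 := by
      ext T
      by_cases hT : T ∈ level N ℓ (s + 1)
      · exact congrFun hw ⟨T, hT⟩
      · exact notMem_support.1 fun h => hT (support_raise_subset hsupp h)
    have := eq_zero_of_lower_raise_eq_smul hs' le_rfl hsupp (by simp [hraise])
    ext T
    simpa [extend] using congrFun this T
  simpa using LinearMap.finrank_le_finrank_of_injective hinj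

def reflect (N : ℕ) (T : Finset ℕ) : Finset ℕ := T.image (N - 1 - ·)

lemma reflect_reflect (hT : T ⊆ range N) : reflect N (reflect N T) = T := by
  rw [reflect, reflect, image_image]
  refine (image_congr fun t ht => ?_).trans image_id
  have := mem_range.1 (hT ht)
  simp only [comp_apply, id]
  omega

lemma reflect_mem_level {s' : ℕ} (h : s + s' = ℓ * (N - 1)) (hT : T ∈ level N ℓ s) :
    reflect N T ∈ level N ℓ s' := by
  obtain ⟨hsub, hcard, hsum⟩ := mem_level.1 hT
  have hlt : ∀ t ∈ T, t < N := fun t ht => mem_range.1 (hsub ht)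
  have hinj : Set.InjOn (N - 1 - ·) T := fun a ha b hb hab => by
    have := hlt a ha; have := hlt b hb; simp only at hab; omega
  refine mem_level.2 ⟨fun t ht => ?_, by rw [reflect, card_image_of_injOn hinj, hcard], ?_⟩
  · obtain ⟨a, ha, rfl⟩ := mem_image.1 ht
    have := hlt a ha
    exact mem_range.2 (by omega)
  · have hpair : ∑ t ∈ T, (N - 1 - t) + ∑ t ∈ T, t = ℓ * (N - 1) := by
      rw [← sum_add_distrib, sum_congr rfl fun t ht => Nat.sub_add_cancel (by
        have := hlt t ht; omega), sum_const, hcard, smul_eq_mul]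
    rw [reflect, sum_image hinj]
    omega

lemma card_level_eq_of_add_eq {s' : ℕ} (h : s + s' = ℓ * (N - 1)) :
    #(level N ℓ s) = #(level N ℓ s') :=
  card_nbij' (reflect N) (reflect N) (fun _ hT => reflect_mem_level h hT)
    (fun _ hT => reflect_mem_level (by omega) hT)
    (fun _ hT => reflect_reflect (mem_level.1 hT).1)
    (fun _ hT => reflect_reflect (mem_level.1 hT).1)

end Levels

section Partitions

variable {ℓ : ℕ} {α : Type*} [LinearOrder α]

lemma strictMono_add_le {f : Fin ℓ → ℕ} (hf : StrictMono f) {i j : Fin ℓ} (hij : i ≤ j) :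
    f i + j ≤ f j + i := by
  have hcard := card_le_card_of_injOn f (s := Icc i j) (t := Icc (f i) (f j))
    (fun x hx => by
      rw [coe_Icc, Set.mem_Icc] at hx ⊢
      exact ⟨hf.monotone hx.1, hf.monotone hx.2⟩) hf.injective.injOn
  rw [Fin.card_Icc, Nat.card_Icc] at hcard
  have : f i ≤ f j := hf.monotone hij
  have : (i : ℕ) ≤ j := hij
  omega

lemma val_le_orderEmbedding (f : Fin ℓ ↪o ℕ) (i : Fin ℓ) : (i : ℕ) ≤ f i := by
  have := strictMono_add_le f.strictMono (show (⟨0, i.pos⟩ : Fin ℓ) ≤ i from Nat.zero_le _)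
  simp only at this
  omega

def addIndex (b : Fin ℓ →o ℕ) : Fin ℓ ↪o ℕ :=
  OrderEmbedding.ofStrictMono (fun i => b i + i) fun i j hij => by
    have := b.monotone hij.le
    have : (i : ℕ) < j := hij
    show b i + i < b j + j
    omega

def subIndex (f : Fin ℓ ↪o ℕ) : Fin ℓ →o ℕ :=
  ⟨fun i => f i - i, fun i j hij => by
    have := strictMono_add_le f.strictMono hij
    have : (i : ℕ) ≤ j := hij
    show f i - i ≤ f j - j
    omega⟩

@[simp]
lemma addIndex_apply (b : Fin ℓ →o ℕ) (i : Fin ℓ) : addIndex b i = b i + i := rfl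

@[simp]
lemma subIndex_apply (f : Fin ℓ ↪o ℕ) (i : Fin ℓ) : subIndex f i = f i - i := rfl

@[simp]
lemma subIndex_addIndex (b : Fin ℓ →o ℕ) : subIndex (addIndex b) = b := by
  ext i; simp

@[simp]
lemma addIndex_subIndex (f : Fin ℓ ↪o ℕ) : addIndex (subIndex f) = f := by
  ext i; simp [Nat.sub_add_cancel (val_le_orderEmbedding f i)]

lemma sum_addIndex (b : Fin ℓ →o ℕ) : ∑ i, addIndex b i = ∑ i, b i + ∑ i ∈ range ℓ, i := by
  simp [sum_add_distrib, Fin.sum_univ_eq_sum_range (fun i => i) ℓ]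

lemma sum_subIndex (f : Fin ℓ ↪o ℕ) : ∑ i, subIndex f i + ∑ i ∈ range ℓ, i = ∑ i, f i := by
  rw [← sum_addIndex, addIndex_subIndex]

lemma sum_orderEmbOfFin {T : Finset ℕ} (h : #T = ℓ) :
    ∑ i, T.orderEmbOfFin h i = ∑ t ∈ T, t := by
  conv_rhs => rw [← image_orderEmbOfFin_univ T h]
  rw [sum_image fun _ _ _ _ hij => (T.orderEmbOfFin h).injective hij]

lemma subIndex_orderEmbOfFin_le {m : ℕ} {T : Finset ℕ} (hT : T ⊆ range (ℓ + m)) (h : #T = ℓ)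
    (i : Fin ℓ) : subIndex (T.orderEmbOfFin h) i ≤ m := by
  let last : Fin ℓ := ⟨ℓ - 1, by have := i.pos; omega⟩
  have := strictMono_add_le (T.orderEmbOfFin h).strictMono
    (show i ≤ last from Fin.le_def.2 (by simp only [last]; omega))
  have := mem_range.1 (hT (T.orderEmbOfFin_mem h last))
  simp only [subIndex_apply, last] at *
  omega

def levelEquiv (ℓ m k : ℕ) :
    level (ℓ + m) ℓ (∑ i ∈ range ℓ, i + k) ≃
      {b : Fin ℓ →o ℕ // (∀ i, b i ≤ m) ∧ ∑ i, b i = k} where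
  toFun T := ⟨subIndex (T.1.orderEmbOfFin (mem_level.1 T.2).2.1),
    subIndex_orderEmbOfFin_le (mem_level.1 T.2).1 _, by
      have := sum_subIndex (T.1.orderEmbOfFin (mem_level.1 T.2).2.1)
      rw [sum_orderEmbOfFin] at this
      have := (mem_level.1 T.2).2.2
      omega⟩
  invFun b := ⟨univ.image (addIndex b.1), mem_level.2 ⟨fun t ht => by
      obtain ⟨i, -, rfl⟩ := mem_image.1 ht
      have := b.2.1 i
      simp only [addIndex_apply, mem_range]
      omega, by simp [card_image_of_injective _ (addIndex b.1).injective], by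
      rw [sum_image fun _ _ _ _ hij => (addIndex b.1).injective hij, sum_addIndex, b.2.2,
        add_comm]⟩⟩
  left_inv T := Subtype.ext (by simp [image_orderEmbOfFin_univ])
  right_inv b := Subtype.ext (by
    simp only
    rw [← orderEmbOfFin_unique' _ fun i => mem_image_of_mem _ (mem_univ i), subIndex_addIndex])

lemma orderHom_eq_of_map_univ_eq {b b' : Fin ℓ →o α} (h : univ.val.map b = univ.val.map b') :
    b = b' := by
  rw [Fin.univ_val_map, Fin.univ_val_map, Multiset.coe_eq_coe] at h
  exact OrderHom.ext _ _ (List.ofFn_inj.1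
    (h.eq_of_sortedLE b.monotone.sortedLE_ofFn b'.monotone.sortedLE_ofFn))

def sortedTuple (M : Multiset α) (h : M.card = ℓ) : Fin ℓ →o α :=
  ⟨fun i => (M.sort)[(i : ℕ)]'(by rw [Multiset.length_sort, h]; exact i.2), fun _ _ hij =>
    (Multiset.pairwise_sort M _).sortedLE.getElem_le_getElem_of_le hij⟩

lemma sortedTuple_mem (M : Multiset α) (h : M.card = ℓ) (i : Fin ℓ) : sortedTuple M h i ∈ M :=
  (Multiset.mem_sort _).1 (List.getElem_mem _)

lemma map_univ_sortedTuple (M : Multiset α) (h : M.card = ℓ) :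
    univ.val.map (sortedTuple M h) = M := by
  conv_rhs => rw [← Multiset.sort_eq M (· ≤ ·)]
  rw [Fin.univ_val_map, Multiset.coe_eq_coe]
  exact List.Perm.of_eq (List.ext_getElem (by simp [h]) fun i _ _ => by
    rw [List.getElem_ofFn]; rfl)

lemma filter_ne_zero_add_replicate (M : Multiset ℕ) :
    M.filter (· ≠ 0) + .replicate (M.card - (M.filter (· ≠ 0)).card) 0 = M := by
  have hzero : M.filter (fun a => ¬a ≠ 0) = .replicate (M.card - (M.filter (· ≠ 0)).card) 0 := by
    refine Multiset.eq_replicate.2 ⟨?_, fun a ha => not_not.1 (Multiset.mem_filter.1 ha).2⟩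
    have := congrArg Multiset.card (Multiset.filter_add_not (· ≠ 0) M)
    rw [Multiset.card_add] at this
    omega
  rw [← hzero, Multiset.filter_add_not]

def partitionEquiv (ℓ m k : ℕ) :
    {b : Fin ℓ →o ℕ // (∀ i, b i ≤ m) ∧ ∑ i, b i = k} ≃
      {p : k.Partition // p.parts.card ≤ ℓ ∧ ∀ a ∈ p.parts, a ≤ m} where
  toFun b := ⟨.ofSums k (univ.val.map b.1) ((sum_eq_multiset_sum _ _).symm.trans b.2.2), by
      simpa using Multiset.card_le_card (Multiset.filter_le (· ≠ 0) (univ.val.map b.1)), by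
      intro a ha
      rw [Nat.Partition.ofSums_parts] at ha
      obtain ⟨i, -, rfl⟩ := Multiset.mem_map.1 (Multiset.mem_of_mem_filter ha)
      exact b.2.1 i⟩
  invFun p := ⟨sortedTuple (p.1.parts + .replicate (ℓ - p.1.parts.card) 0) (by simp [p.2.1]),
    fun i => by
      rcases Multiset.mem_add.1
        (sortedTuple_mem (p.1.parts + .replicate (ℓ - p.1.parts.card) 0) _ i) with h | h
      · exact p.2.2 _ h
      · simp [Multiset.eq_of_mem_replicate h], by
      rw [Finset.sum, map_univ_sortedTuple]
      simp [p.1.parts_sum]⟩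
  left_inv b := Subtype.ext <| orderHom_eq_of_map_univ_eq <| by
    rw [map_univ_sortedTuple, Nat.Partition.ofSums_parts]
    convert filter_ne_zero_add_replicate (univ.val.map b.1) using 4
    simp
  right_inv p := Subtype.ext <| Nat.Partition.ext <| by
    simp only [map_univ_sortedTuple, Nat.Partition.ofSums_parts, Multiset.filter_add]
    rw [Multiset.filter_eq_self.2 fun a ha => (p.1.parts_pos ha).ne',
      Multiset.filter_eq_nil.2 fun a ha => not_not.2 (Multiset.eq_of_mem_replicate ha), add_zero]

end Partitions

end Sylvester

open Sylvester

lemma pcoef_eq_card_level (ℓ m k : ℕ) :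
    pcoef ℓ m k = #(level (ℓ + m) ℓ (∑ i ∈ range ℓ, i + k)) := by
  rw [pcoef, ← Nat.card_congr ((levelEquiv ℓ m k).trans (partitionEquiv ℓ m k)),
    Nat.card_eq_finsetCard]

lemma two_mul_sum_range_add_mul (ℓ m : ℕ) :
    2 * ∑ i ∈ range ℓ, i + ℓ * m = ℓ * (ℓ + m - 1) := by
  rw [mul_comm, sum_range_id_mul_two]
  rcases ℓ with _ | ℓ
  · simp
  · rw [show ℓ + 1 + m - 1 = ℓ + m by omega]
    simp only [Nat.add_sub_cancel]
    ring

lemma pcoef_le_pcoef_succ {ℓ m k : ℕ} (h : 2 * k < ℓ * m) : pcoef ℓ m k ≤ pcoef ℓ m (k + 1) := by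
  rw [pcoef_eq_card_level, pcoef_eq_card_level, ← add_assoc]
  exact card_level_le_card_level_succ (by have := two_mul_sum_range_add_mul ℓ m; omega)

lemma pcoef_symm {ℓ m k : ℕ} (h : k ≤ ℓ * m) : pcoef ℓ m (ℓ * m - k) = pcoef ℓ m k := by
  rw [pcoef_eq_card_level, pcoef_eq_card_level]
  exact card_level_eq_of_add_eq (by have := two_mul_sum_range_add_mul ℓ m; omega)

/-- Sylvester's theorem: the coefficient sequence
`p_0(ℓ,m), …, p_{ℓm}(ℓ,m)` of `(m+ℓ choose m)_q` is unimodal: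
it is weakly increasing up to `⌊ℓm/2⌋` and weakly decreasing from `⌈ℓm/2⌉` on. -/
theorem stmt3 (ℓ m : ℕ) :
    (∀ k : ℕ, k < ℓ * m / 2 → pcoef ℓ m k ≤ pcoef ℓ m (k + 1)) ∧
    (∀ k : ℕ, (ℓ * m + 1) / 2 ≤ k → k < ℓ * m → pcoef ℓ m (k + 1) ≤ pcoef ℓ m k) := by
  refine ⟨fun k hk => pcoef_le_pcoef_succ (by omega), fun k hk₁ hk₂ => ?_⟩
  calc pcoef ℓ m (k + 1) = pcoef ℓ m (ℓ * m - (k + 1)) := (pcoef_symm hk₂).symm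
    _ ≤ pcoef ℓ m (ℓ * m - (k + 1) + 1) := pcoef_le_pcoef_succ (by omega)
    _ = pcoef ℓ m k := by rw [show ℓ * m - (k + 1) + 1 = ℓ * m - k by omega, pcoef_symm hk₂.le]
end

section
/- For $\ell = 5, m = 6$, the three middle coefficients of $\binom{11}{5}_q$ are equal: $p_{14}(5,6) = p_{15}(5,6) = p_{16}(5,6)$, so strict unimodality in the sense of $(\circ)$ fails for $(5,6)$. -/
open Polynomial Finset

/-!
Padding a partition in an `ℓ × m` box with zeros to exactly `ℓ` parts and sorting it
decreasingly identifies it with a non-increasing list of length `ℓ` with entries at most `m`.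
These lists are enumerated by recursion on the first entry, and among the `462` of them for
`(ℓ, m) = (5, 6)` exactly `32` have sum `n` for each of `n = 14, 15, 16`.
-/

-- Structural recursion, so that the kernel can evaluate the enumeration.
def antitoneLists : ℕ → ℕ → List (List ℕ)
  | 0, _ => [[]]
  | k + 1, b => (List.range (b + 1)).flatMap fun a => (antitoneLists k a).map (a :: ·)

theorem mem_antitoneLists {k b : ℕ} {l : List ℕ} :
    l ∈ antitoneLists k b ↔ l.length = k ∧ (b :: l).SortedGE := by
  rw [List.sortedGE_iff_isChain]
  induction k generalizing b l with
  | zero => cases l <;> simp [antitoneLists]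
  | succ k ih =>
    cases l with
    | nil => simp [antitoneLists]
    | cons a t => simp [antitoneLists, ih, List.isChain_cons_cons, and_left_comm]

theorem nodup_antitoneLists (k b : ℕ) : (antitoneLists k b).Nodup := by
  induction k generalizing b with
  | zero => simp [antitoneLists]
  | succ k ih =>
    refine List.nodup_flatMap.2 ⟨fun a _ => (ih a).map List.cons_injective, ?_⟩
    refine List.nodup_range.imp fun hne => List.disjoint_left.2 ?_
    simp only [List.mem_map]
    rintro _ ⟨t, -, rfl⟩ ⟨t', -, h⟩
    exact hne (List.cons_eq_cons.1 h).1.symm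

theorem Multiset.filter_ne_add_replicate_count {α : Type*} [DecidableEq α] (s : Multiset α)
    (b : α) : s.filter (· ≠ b) + Multiset.replicate (s.count b) b = s := by
  rw [← Multiset.filter_eq', ← Multiset.filter_add_not (· ≠ b) s]
  simp

def boxPartitionsEquivPadded (ℓ m n : ℕ) :
    {p : n.Partition // p.parts.card ≤ ℓ ∧ ∀ a ∈ p.parts, a ≤ m} ≃
      {s : Multiset ℕ // Multiset.card s = ℓ ∧ (∀ a ∈ s, a ≤ m) ∧ s.sum = n} where
  toFun p := ⟨p.1.parts + Multiset.replicate (ℓ - p.1.parts.card) 0, by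
    obtain ⟨p, hcard, hle⟩ := p
    refine ⟨by simp only [Multiset.card_add, Multiset.card_replicate]; omega, fun a ha => ?_,
      by simp [p.parts_sum]⟩
    rcases Multiset.mem_add.1 ha with ha | ha
    · exact hle a ha
    · simp [Multiset.eq_of_mem_replicate ha]⟩
  invFun s := ⟨Nat.Partition.ofSums n s.1 s.2.2.2,
    (Multiset.card_le_card (Multiset.filter_le _ _)).trans_eq s.2.1,
    fun a ha => s.2.2.1 a (Multiset.mem_of_mem_filter ha)⟩
  left_inv p := by
    ext : 2
    simp [Multiset.filter_add, Multiset.filter_eq_self.2 fun a ha => (p.1.parts_pos ha).ne',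
      Multiset.mem_replicate]
  right_inv := by
    rintro ⟨s, hcard, -, -⟩
    have hs := Multiset.filter_ne_add_replicate_count s 0
    have hcount : ℓ - (s.filter (· ≠ 0)).card = s.count 0 := by
      have := congrArg Multiset.card hs
      simp only [Multiset.card_add, Multiset.card_replicate] at this
      omega
    ext : 1
    change s.filter (· ≠ 0) + Multiset.replicate (ℓ - (s.filter (· ≠ 0)).card) 0 = s
    rw [hcount, hs]

def antitoneListsEquivMultisets (ℓ m n : ℕ) :
    {l : List ℕ // l ∈ antitoneLists ℓ m ∧ l.sum = n} ≃
      {s : Multiset ℕ // Multiset.card s = ℓ ∧ (∀ a ∈ s, a ≤ m) ∧ s.sum = n} where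
  toFun l := ⟨l.1, by
    obtain ⟨l, hl, hsum⟩ := l
    rw [mem_antitoneLists, List.sortedGE_iff_pairwise, List.pairwise_cons] at hl
    exact ⟨hl.1, hl.2.1, hsum⟩⟩
  invFun s := ⟨s.1.sort (· ≥ ·), by
    obtain ⟨s, hcard, hle, hsum⟩ := s
    refine ⟨mem_antitoneLists.2 ⟨by simp [hcard], ?_⟩,
      by rw [← Multiset.sum_coe, Multiset.sort_eq, hsum]⟩
    rw [List.sortedGE_iff_pairwise, List.pairwise_cons]
    exact ⟨fun a ha => hle a ((Multiset.mem_sort _).1 ha), Multiset.pairwise_sort _ _⟩⟩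
  left_inv l := by
    obtain ⟨l, hl, -⟩ := l
    have hsorted := (mem_antitoneLists.1 hl).2.pairwise.of_cons.sortedGE
    exact Subtype.ext <| List.Perm.eq_of_sortedGE
      (Multiset.pairwise_sort (l : Multiset ℕ) _).sortedGE hsorted
      (Multiset.coe_eq_coe.1 (Multiset.sort_eq (l : Multiset ℕ) _))
  right_inv s := Subtype.ext (Multiset.sort_eq _ _)

theorem pcoef_eq_length_filter (ℓ m n : ℕ) :
    pcoef ℓ m n = ((antitoneLists ℓ m).filter (·.sum = n)).length := by
  rw [pcoef, Nat.card_congr ((boxPartitionsEquivPadded ℓ m n).trans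
      (antitoneListsEquivMultisets ℓ m n).symm),
    ← List.toFinset_card_of_nodup ((nodup_antitoneLists ℓ m).filter _),
    ← Nat.card_eq_finsetCard]
  exact Nat.card_congr (Equiv.subtypeEquivRight fun l => by simp)

/-- For `ℓ = 5, m = 6`, the three middle coefficients of `(11 choose 5)_q`
(of degree 30) are equal: `p₁₄ = p₁₅ = p₁₆`, so strict unimodality `(∘)`
(which requires `p₁₄ < p₁₅ > p₁₆`) fails for `(5,6)`. -/
theorem stmt14 :
    pcoef 5 6 14 = pcoef 5 6 15 ∧ pcoef 5 6 15 = pcoef 5 6 16 ∧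
    ¬ (pcoef 5 6 14 < pcoef 5 6 15 ∧ pcoef 5 6 16 < pcoef 5 6 15) := by
  have h : pcoef 5 6 14 = 32 ∧ pcoef 5 6 15 = 32 ∧ pcoef 5 6 16 = 32 := by
    simp only [pcoef_eq_length_filter]
    decide
  omega
end
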